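/- Let q ∈ (0,1), β < 1, and |t| < |z| < 1 with q(τ+τ⁻¹) = β(z+z⁻¹). Then the generating function identity holds: ∑_{n=0}^∞ ((β;q)_n/(q;q)_n) p_n^{(q,β)}(z+z⁻¹) t^n = (qτt;q)_∞ (qτ⁻¹t;q)_∞ / ((zt;q)_∞ (z⁻¹t;q)_∞). -/

import Mathlib

/-- The finite q-Pochhammer symbol `(a;Q)_n = ∏_{j=0}^{n-1} (1 - a Q^j)`. -/
def qPoch (a Q : ℂ) (n : ℕ) : ℂ := ∏ j ∈ Finset.range n, (1 - a * Q ^ j)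

/-- The infinite q-Pochhammer symbol `(a;Q)_∞ = ∏_{j=0}^{∞} (1 - a Q^j)`. -/
noncomputable def qPochInf (a Q : ℂ) : ℂ := ∏' j : ℕ, (1 - a * Q ^ j)

/-!
With `x = z + z⁻¹`, the normalized coefficients `A n = (β;q)_n / (q;q)_n * p_n(x)` satisfy
`(1 - q^(n+1)) A (n+1) = x (1 - β q^n) A n - (1 - q^(n+1)) A (n-1)`. This perturbs, by terms of
relative size `O(q^n)`, a recurrence with characteristic roots `z` and `z⁻¹`, so
`A n = O(‖z‖^(-n))` and `G(s) = ∑ A n s^n` converges for `‖s‖ < ‖z‖`. Coefficientwise, the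
recurrence is the q-difference equation `(1 - zs)(1 - z⁻¹s) G(s) = (1 - qτs)(1 - qτ⁻¹s) G(qs)`
(using `q(τ + τ⁻¹) = βx`), and `(as;q)_∞ = (1 - as) (aqs;q)_∞` shows that
`N(s)/D(s) = (qτs;q)_∞ (qτ⁻¹s;q)_∞ / ((zs;q)_∞ (z⁻¹s;q)_∞)` satisfies it too. Hence
`Φ = G D - N` obeys `Φ(s) = (1 - qτs)(1 - qτ⁻¹s) Φ(qs)` and `Φ(s) → 0` as `s → 0`; iterating,
`‖Φ(t)‖ ≤ C ‖Φ(q^n t)‖ → 0`.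
-/

open Filter Topology Finset

lemma one_sub_norm_le_norm_one_sub_pow_succ {q : ℂ} (hq : ‖q‖ ≤ 1) (n : ℕ) :
    1 - ‖q‖ ≤ ‖1 - q ^ (n + 1)‖ := by
  have hpow : ‖q‖ ^ (n + 1) ≤ ‖q‖ := pow_le_of_le_one (norm_nonneg q) hq n.succ_ne_zero
  calc 1 - ‖q‖ ≤ ‖(1 : ℂ)‖ - ‖q ^ (n + 1)‖ := by rw [norm_one, norm_pow]; linarith
    _ ≤ ‖1 - q ^ (n + 1)‖ := norm_sub_norm_le _ _

lemma one_sub_pow_succ_ne_zero {q : ℂ} (hq : ‖q‖ < 1) (n : ℕ) : 1 - q ^ (n + 1) ≠ 0 :=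
  norm_pos_iff.1 <| (sub_pos.2 hq).trans_le (one_sub_norm_le_norm_one_sub_pow_succ hq.le n)

lemma norm_one_sub_le_exp_norm (w : ℂ) : ‖1 - w‖ ≤ Real.exp ‖w‖ := by
  calc ‖1 - w‖ ≤ ‖w‖ + 1 := by simpa [add_comm] using norm_sub_le (1 : ℂ) w
    _ ≤ Real.exp ‖w‖ := Real.add_one_le_exp _

lemma exp_mul_geom_sum_le {c r : ℝ} (hc : 0 ≤ c) (hr0 : 0 ≤ r) (hr1 : r < 1) (n : ℕ) :
    Real.exp (c * ∑ k ∈ range n, r ^ k) ≤ Real.exp (c / (1 - r)) := by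
  have h := geom_sum_Ico_le_of_lt_one (m := 0) (n := n) hr0 hr1
  rw [pow_zero, ← range_eq_Ico] at h
  rw [Real.exp_le_exp, div_eq_mul_one_div]
  exact mul_le_mul_of_nonneg_left h hc

lemma le_exp_mul_of_le_exp_mul_pow {E : ℕ → ℝ} {K r : ℝ} (hK : 0 ≤ K) (hr0 : 0 ≤ r) (hr1 : r < 1)
    (hE0 : 0 ≤ E 0) (hE : ∀ n, E (n + 1) ≤ Real.exp (K * r ^ n) * E n) (n : ℕ) :
    E n ≤ Real.exp (K / (1 - r)) * E 0 := by
  have hiter : ∀ n, E n ≤ Real.exp (K * ∑ k ∈ range n, r ^ k) * E 0 := by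
    intro n
    induction n with
    | zero => simp
    | succ n ih =>
      calc E (n + 1) ≤ Real.exp (K * r ^ n) * E n := hE n
        _ ≤ Real.exp (K * r ^ n) * (Real.exp (K * ∑ k ∈ range n, r ^ k) * E 0) := by gcongr
        _ = Real.exp (K * ∑ k ∈ range (n + 1), r ^ k) * E 0 := by
          rw [sum_range_succ, ← mul_assoc, ← Real.exp_add]; ring_nf
  exact (hiter n).trans (mul_le_mul_of_nonneg_right (exp_mul_geom_sum_le hK hr0 hr1 n) hE0)

-- `E n = max (b n) (w n / (1 - σ))` grows by at most a factor `exp (c / (1 - σ) * r ^ n)` per step.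
lemma le_exp_mul_max_of_coupled_le {b w : ℕ → ℝ} {σ c r : ℝ} (hσ0 : 0 ≤ σ) (hσ1 : σ < 1)
    (hc : 0 ≤ c) (hr0 : 0 ≤ r) (hr1 : r < 1) (hb0 : ∀ n, 0 ≤ b n)
    (hb : ∀ n, b (n + 1) ≤ σ * b n + w n) (hw : ∀ n, w (n + 1) ≤ w n + c * r ^ n * b (n + 1))
    (n : ℕ) : b n ≤ Real.exp (c / (1 - σ) / (1 - r)) * max (b 0) (w 0 / (1 - σ)) := by
  have hσ : 0 < 1 - σ := sub_pos.2 hσ1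
  set E : ℕ → ℝ := fun n => max (b n) (w n / (1 - σ))
  have hE0 : ∀ n, 0 ≤ E n := fun n => le_max_of_le_left (hb0 n)
  have hstep : ∀ n, E (n + 1) ≤ Real.exp (c / (1 - σ) * r ^ n) * E n := by
    intro n
    have hbE : b n ≤ E n := le_max_left _ _
    have hwE : w n ≤ (1 - σ) * E n := by
      rw [← div_le_iff₀' hσ]; exact le_max_right _ _
    have hb1 : b (n + 1) ≤ E n := by nlinarith [hb n]
    have hrn : 0 ≤ c * r ^ n := by positivity
    have hw1 : w (n + 1) / (1 - σ) ≤ (c / (1 - σ) * r ^ n + 1) * E n := by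
      rw [div_le_iff₀ hσ]
      field_simp
      nlinarith [hw n, mul_le_mul_of_nonneg_left hb1 hrn]
    have hexp := Real.add_one_le_exp (c / (1 - σ) * r ^ n)
    refine max_le ?_ (hw1.trans (mul_le_mul_of_nonneg_right hexp (hE0 n)))
    refine hb1.trans (le_mul_of_one_le_left (hE0 n) (Real.one_le_exp ?_))
    positivity
  exact (le_max_left _ _).trans
    (le_exp_mul_of_le_exp_mul_pow (div_nonneg hc hσ.le) hr0 hr1 (hE0 0) hstep n)

lemma qPoch_succ (a Q : ℂ) (n : ℕ) : qPoch a Q (n + 1) = qPoch a Q n * (1 - a * Q ^ n) :=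
  prod_range_succ _ _

lemma qPoch_self_succ (q : ℂ) (n : ℕ) : qPoch q q (n + 1) = qPoch q q n * (1 - q ^ (n + 1)) := by
  rw [qPoch_succ, ← pow_succ']

lemma qPoch_self_ne_zero {q : ℂ} (hq : ∀ n, 1 - q ^ (n + 1) ≠ 0) (n : ℕ) : qPoch q q n ≠ 0 :=
  prod_ne_zero_iff.2 fun j _ => by rw [← pow_succ']; exact hq j

lemma summable_norm_neg_mul_pow (a : ℂ) {Q : ℂ} (hQ : ‖Q‖ < 1) :
    Summable fun k : ℕ => ‖-(a * Q ^ k)‖ := by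
  simpa [norm_mul, norm_pow] using
    (summable_geometric_of_lt_one (norm_nonneg Q) hQ).mul_left ‖a‖

lemma qPochInf_eq_tprod_one_add (a Q : ℂ) : qPochInf a Q = ∏' k : ℕ, (1 + -(a * Q ^ k)) := by
  simp only [qPochInf, sub_eq_add_neg]

lemma multipliable_one_sub_mul_pow (a : ℂ) {Q : ℂ} (hQ : ‖Q‖ < 1) :
    Multipliable fun k : ℕ => 1 - a * Q ^ k := by
  simpa only [sub_eq_add_neg] using multipliable_one_add_of_summable (summable_norm_neg_mul_pow a hQ)

lemma qPochInf_eq_one_sub_mul_qPochInf (a : ℂ) {Q : ℂ} (hQ : ‖Q‖ < 1) :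
    qPochInf a Q = (1 - a) * qPochInf (a * Q) Q := by
  have hshift : (fun k : ℕ => 1 - a * Q ^ (k + 1)) = fun k => 1 - a * Q * Q ^ k := by
    ext k; ring
  rw [qPochInf, tprod_eq_zero_mul', hshift, pow_zero, mul_one, qPochInf]
  simpa only [hshift] using multipliable_one_sub_mul_pow (a * Q) hQ

lemma qPochInf_ne_zero {a Q : ℂ} (ha : ‖a‖ < 1) (hQ : ‖Q‖ < 1) : qPochInf a Q ≠ 0 := by
  rw [qPochInf_eq_tprod_one_add]
  refine tprod_one_add_ne_zero_of_summable (fun k hk => ?_) (summable_norm_neg_mul_pow a hQ)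
  have hlt : ‖a * Q ^ k‖ < 1 := by
    rw [norm_mul, norm_pow]
    exact (mul_le_of_le_one_right (norm_nonneg a) (pow_le_one₀ (norm_nonneg Q) hQ.le)).trans_lt ha
  rw [← sub_eq_add_neg, sub_eq_zero] at hk
  simp [← hk] at hlt

lemma tendsto_qPochInf_nhds_zero {Q : ℂ} (hQ : ‖Q‖ < 1) :
    Tendsto (fun a => qPochInf a Q) (𝓝 0) (𝓝 1) := by
  have h := tendsto_tprod_one_add_of_dominated_convergence (𝓕 := 𝓝 (0 : ℂ)) (g := 0)
    (f := fun a k => -(a * Q ^ k)) (bound := fun k => ‖Q‖ ^ k)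
    (summable_geometric_of_lt_one (norm_nonneg Q) hQ)
    (fun k => by simpa using ((continuous_mul_const (Q ^ k)).tendsto 0).neg) ?_
  · simpa only [Pi.zero_apply, add_zero, tprod_one, ← qPochInf_eq_tprod_one_add] using h
  filter_upwards [Metric.ball_mem_nhds (0 : ℂ) one_pos] with a ha k
  rw [norm_neg, norm_mul, norm_pow]
  exact mul_le_of_le_one_left (by positivity) (mem_ball_zero_iff.1 ha).le

lemma qPochInf_mul_qPochInf_eq (a b s : ℂ) {q : ℂ} (hq : ‖q‖ < 1) :
    qPochInf (a * s) q * qPochInf (b * s) q =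
      (1 - a * s) * (1 - b * s) * (qPochInf (a * (q * s)) q * qPochInf (b * (q * s)) q) := by
  rw [qPochInf_eq_one_sub_mul_qPochInf (a * s) hq, qPochInf_eq_one_sub_mul_qPochInf (b * s) hq,
    mul_assoc a, mul_assoc b, mul_comm s q]
  ring

lemma norm_one_sub_mul_one_sub_mul_le_exp (a b s : ℂ) :
    ‖(1 - a * s) * (1 - b * s)‖ ≤ Real.exp ((‖a‖ + ‖b‖) * ‖s‖) := by
  calc ‖(1 - a * s) * (1 - b * s)‖ = ‖1 - a * s‖ * ‖1 - b * s‖ := norm_mul _ _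
    _ ≤ Real.exp ‖a * s‖ * Real.exp ‖b * s‖ :=
      mul_le_mul (norm_one_sub_le_exp_norm _) (norm_one_sub_le_exp_norm _) (norm_nonneg _)
        (Real.exp_nonneg _)
    _ = Real.exp ((‖a‖ + ‖b‖) * ‖s‖) := by rw [← Real.exp_add, norm_mul, norm_mul, add_mul]

section PowerSeries

variable {A : ℕ → ℂ} {ρ M : ℝ}

lemma norm_mul_pow_le_of_norm_mul_pow_le (hρ : 0 < ρ) (hM : ∀ n, ‖A n‖ * ρ ^ n ≤ M) {s : ℂ}
    {r : ℝ} (hs : ‖s‖ ≤ r) (n : ℕ) : ‖A n * s ^ n‖ ≤ M * (r / ρ) ^ n := by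
  have hr : 0 ≤ r := (norm_nonneg s).trans hs
  calc ‖A n * s ^ n‖ ≤ ‖A n‖ * r ^ n := by
        rw [norm_mul, norm_pow]; gcongr
    _ = ‖A n‖ * ρ ^ n * (r / ρ) ^ n := by rw [div_pow]; field_simp
    _ ≤ M * (r / ρ) ^ n := by gcongr; exact hM n

lemma summable_mul_pow_of_norm_mul_pow_le (hM : ∀ n, ‖A n‖ * ρ ^ n ≤ M) {s : ℂ}
    (hs : ‖s‖ < ρ) : Summable fun n => A n * s ^ n := by
  have hρ : 0 < ρ := (norm_nonneg s).trans_lt hs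
  refine Summable.of_norm_bounded ?_ (norm_mul_pow_le_of_norm_mul_pow_le hρ hM le_rfl)
  exact (summable_geometric_of_lt_one (by positivity) ((div_lt_one hρ).2 hs)).mul_left M

lemma tendsto_tsum_mul_pow_nhds_zero (hρ : 0 < ρ) (hM : ∀ n, ‖A n‖ * ρ ^ n ≤ M) :
    Tendsto (fun s => ∑' n, A n * s ^ n) (𝓝 0) (𝓝 (A 0)) := by
  have h := tendsto_tsum_of_dominated_convergence (𝓕 := 𝓝 (0 : ℂ))
    (f := fun s n => A n * s ^ n) (g := fun n => A n * 0 ^ n)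
    (bound := fun n => M * (1 / 2) ^ n)
    ((summable_geometric_of_lt_one (by norm_num) (by norm_num)).mul_left M)
    (fun n => ((continuous_pow n).tendsto 0).const_mul (A n)) ?_
  · rwa [tsum_eq_single 0 (fun n hn => by simp [hn]), pow_zero, mul_one] at h
  filter_upwards [Metric.closedBall_mem_nhds (0 : ℂ) (half_pos hρ)] with s hs n
  have := norm_mul_pow_le_of_norm_mul_pow_le hρ hM (mem_closedBall_zero_iff.1 hs) n
  rwa [div_div_cancel_left' hρ.ne', ← one_div] at this

end PowerSeries

-- Without `ε`, `A n = a z⁻ⁿ + b zⁿ` and `(A (n + 1) - z * A n) * z ^ (n + 1) = a (1 - z²)` is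
-- constant; `ε` changes it by `O(rⁿ ‖A (n + 1)‖ ‖z‖ⁿ⁺¹)` per step.
lemma exists_norm_mul_pow_le_of_recurrence {z : ℂ} {A ε : ℕ → ℂ} {C r : ℝ} (hz0 : z ≠ 0)
    (hz1 : ‖z‖ < 1) (hr0 : 0 ≤ r) (hr1 : r < 1) (hε : ∀ n, ‖ε n‖ ≤ C * r ^ n)
    (hA : ∀ n, A (n + 2) = (z + z⁻¹) * A (n + 1) - A n + ε n * A (n + 1)) :
    ∃ M, ∀ n, ‖A n‖ * ‖z‖ ^ n ≤ M := by
  set u : ℕ → ℂ := fun n => (A (n + 1) - z * A n) * z ^ (n + 1) with hu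
  have hC : 0 ≤ C := by simpa using (norm_nonneg _).trans (hε 0)
  have hb : ∀ n, ‖A (n + 1)‖ * ‖z‖ ^ (n + 1) ≤ ‖z‖ ^ 2 * (‖A n‖ * ‖z‖ ^ n) + ‖u n‖ := by
    intro n
    have hsplit : A (n + 1) * z ^ (n + 1) = z ^ 2 * (A n * z ^ n) + u n := by simp only [hu]; ring
    calc ‖A (n + 1)‖ * ‖z‖ ^ (n + 1) = ‖z ^ 2 * (A n * z ^ n) + u n‖ := by
          rw [← hsplit, norm_mul, norm_pow]
      _ ≤ ‖z ^ 2 * (A n * z ^ n)‖ + ‖u n‖ := norm_add_le _ _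
      _ = ‖z‖ ^ 2 * (‖A n‖ * ‖z‖ ^ n) + ‖u n‖ := by rw [norm_mul, norm_mul, norm_pow, norm_pow]
  have hw : ∀ n, ‖u (n + 1)‖ ≤ ‖u n‖ + C * r ^ n * (‖A (n + 1)‖ * ‖z‖ ^ (n + 1)) := by
    intro n
    have hsplit : u (n + 1) = u n + ε n * z * (A (n + 1) * z ^ (n + 1)) := by
      simp only [hu, hA n]
      linear_combination (A (n + 1) * z ^ (n + 1)) * mul_inv_cancel₀ hz0
    have hεz : ‖ε n * z‖ ≤ C * r ^ n := by
      rw [norm_mul]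
      exact (mul_le_of_le_one_right (norm_nonneg _) hz1.le).trans (hε n)
    calc ‖u (n + 1)‖ ≤ ‖u n‖ + ‖ε n * z‖ * (‖A (n + 1)‖ * ‖z‖ ^ (n + 1)) := by
          rw [hsplit, ← norm_pow, ← norm_mul, ← norm_mul]
          exact norm_add_le _ _
      _ ≤ ‖u n‖ + C * r ^ n * (‖A (n + 1)‖ * ‖z‖ ^ (n + 1)) := by gcongr
  exact ⟨_, le_exp_mul_max_of_coupled_le (sq_nonneg _) (by nlinarith [norm_nonneg z]) hC hr0 hr1
    (fun n => by positivity) hb hw⟩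

section QRecurrence

variable {q β x : ℂ} {A : ℕ → ℂ}

lemma exists_norm_mul_pow_le_of_qRecurrence {z : ℂ} (hq : ‖q‖ < 1) (hz0 : z ≠ 0)
    (hz1 : ‖z‖ < 1) (hrec : ∀ n, (1 - q ^ (n + 2)) * A (n + 2) =
      (z + z⁻¹) * (1 - β * q ^ (n + 1)) * A (n + 1) - (1 - q ^ (n + 2)) * A n) :
    ∃ M, ∀ n, ‖A n‖ * ‖z‖ ^ n ≤ M := by
  have hq' : 0 < 1 - ‖q‖ := sub_pos.2 hq
  set ε : ℕ → ℂ := fun n => (z + z⁻¹) * (q ^ 2 - β * q) * q ^ n / (1 - q ^ (n + 2)) with hε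
  refine exists_norm_mul_pow_le_of_recurrence (ε := ε)
    (C := ‖(z + z⁻¹) * (q ^ 2 - β * q)‖ / (1 - ‖q‖)) hz0 hz1 (norm_nonneg q) hq (fun n => ?_)
    (fun n => ?_)
  · rw [hε, norm_div, norm_mul, norm_pow, div_mul_eq_mul_div]
    gcongr
    exact one_sub_norm_le_norm_one_sub_pow_succ hq.le (n + 1)
  · have hne : 1 - q ^ (n + 2) ≠ 0 := one_sub_pow_succ_ne_zero hq (n + 1)
    rw [hε]
    generalize z + z⁻¹ = x at hrec ⊢
    field_simp
    linear_combination hrec n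

lemma mul_tsum_eq_mul_tsum_of_qRecurrence {s : ℂ} (h1 : (1 - q) * A 1 = x * (1 - β) * A 0)
    (hrec : ∀ n, (1 - q ^ (n + 2)) * A (n + 2) =
      x * (1 - β * q ^ (n + 1)) * A (n + 1) - (1 - q ^ (n + 2)) * A n)
    (hs : Summable fun n => A n * s ^ n) (hqs : Summable fun n => A n * (q * s) ^ n) :
    (1 - x * s + s ^ 2) * ∑' n, A n * s ^ n =
      (1 - β * x * s + q ^ 2 * s ^ 2) * ∑' n, A n * (q * s) ^ n := by
  set G := ∑' n, A n * s ^ n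
  set H := ∑' n, A n * (q * s) ^ n
  set u : ℕ → ℂ := fun n => (1 - q ^ n) * A n * s ^ n with hu
  set v : ℕ → ℂ := fun n => x * (1 - β * q ^ n) * A n * s ^ (n + 1) with hv
  set w : ℕ → ℂ := fun n => (1 - q ^ (n + 2)) * A n * s ^ (n + 2) with hw
  have hG := hs.hasSum
  have hH := hqs.hasSum
  have hU : HasSum u (G - H) := by
    refine (hG.sub hH).congr_fun fun n => ?_
    rw [hu, mul_pow]; ring
  have hV : HasSum v (x * s * G - β * x * s * H) := by
    refine ((hG.mul_left (x * s)).sub (hH.mul_left (β * x * s))).congr_fun fun n => ?_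
    rw [hv, mul_pow]; ring
  have hW : HasSum w (s ^ 2 * G - q ^ 2 * s ^ 2 * H) := by
    refine ((hG.mul_left (s ^ 2)).sub (hH.mul_left (q ^ 2 * s ^ 2))).congr_fun fun n => ?_
    rw [hw, mul_pow]; ring
  have hU2 := (hasSum_nat_add_iff' 2).2 hU
  have hV1 := (hasSum_nat_add_iff' 1).2 hV
  have hshift : (fun n => u (n + 2)) = fun n => v (n + 1) - w n := by
    ext n; simp only [hu, hv, hw]; linear_combination s ^ (n + 2) * hrec n
  rw [hshift] at hU2
  have hsum := hU2.unique (hV1.sub hW)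
  simp only [sum_range_succ, sum_range_zero, hu, hv] at hsum
  linear_combination hsum + s * h1

end QRecurrence

lemma eq_zero_of_eq_mul_comp_mul {Φ f : ℂ → ℂ} {q : ℂ} {R c : ℝ} (hq : ‖q‖ < 1) (hc : 0 ≤ c)
    (hf : ∀ s, ‖s‖ ≤ R → ‖f s‖ ≤ Real.exp (c * ‖s‖))
    (hΦ : ∀ s, ‖s‖ ≤ R → Φ s = f s * Φ (q * s)) (hΦ0 : Tendsto Φ (𝓝 0) (𝓝 0))
    {t : ℂ} (ht : ‖t‖ ≤ R) : Φ t = 0 := by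
  have hqt : ∀ n, ‖q ^ n * t‖ = ‖t‖ * ‖q‖ ^ n := fun n => by rw [norm_mul, norm_pow, mul_comm]
  have hiter : ∀ n, ‖Φ t‖ ≤ Real.exp (c * ‖t‖ * ∑ k ∈ range n, ‖q‖ ^ k) * ‖Φ (q ^ n * t)‖ := by
    intro n
    induction n with
    | zero => simp
    | succ n ih =>
      have hs : ‖q ^ n * t‖ ≤ R :=
        (hqt n).trans_le ((mul_le_of_le_one_right (norm_nonneg t)
          (pow_le_one₀ (norm_nonneg q) hq.le)).trans ht)
      have hstep : ‖Φ (q ^ n * t)‖ ≤ Real.exp (c * (‖t‖ * ‖q‖ ^ n)) * ‖Φ (q ^ (n + 1) * t)‖ := by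
        rw [hΦ _ hs, norm_mul, ← hqt, pow_succ', mul_assoc]
        gcongr
        exact hf _ hs
      calc ‖Φ t‖ ≤ Real.exp (c * ‖t‖ * ∑ k ∈ range n, ‖q‖ ^ k) * ‖Φ (q ^ n * t)‖ := ih
        _ ≤ Real.exp (c * ‖t‖ * ∑ k ∈ range n, ‖q‖ ^ k) *
            (Real.exp (c * (‖t‖ * ‖q‖ ^ n)) * ‖Φ (q ^ (n + 1) * t)‖) := by gcongr
        _ = _ := by rw [← mul_assoc, ← Real.exp_add, sum_range_succ]; ring_nf
  have hlim : Tendsto (fun n => Φ (q ^ n * t)) atTop (𝓝 0) :=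
    hΦ0.comp (by simpa using (tendsto_pow_atTop_nhds_zero_of_norm_lt_one hq).mul_const t)
  have hK := fun n => exp_mul_geom_sum_le (mul_nonneg hc (norm_nonneg t)) (norm_nonneg q) hq n
  have hbound : Tendsto (fun n => Real.exp (c * ‖t‖ / (1 - ‖q‖)) * ‖Φ (q ^ n * t)‖) atTop (𝓝 0) :=
    by simpa using hlim.norm.const_mul (Real.exp (c * ‖t‖ / (1 - ‖q‖)))
  refine norm_le_zero_iff.1 (ge_of_tendsto hbound (Eventually.of_forall fun n => ?_))
  exact (hiter n).trans (mul_le_mul_of_nonneg_right (hK n) (norm_nonneg _))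

section Normalization

variable {q β x : ℂ} {p A : ℕ → ℂ} (hq : ∀ n, 1 - q ^ (n + 1) ≠ 0)
  (hA : ∀ n, A n = qPoch β q n / qPoch q q n * p n)
include hq hA

lemma one_sub_mul_normalized_one (hp0 : p 0 = 1) (hp1 : p 1 = x) :
    (1 - q) * A 1 = x * (1 - β) * A 0 := by
  have h1 := hq 0
  rw [zero_add, pow_one] at h1
  simp only [hA, qPoch, range_one, prod_singleton, range_zero, prod_empty, pow_zero, mul_one, hp0,
    hp1]
  field_simp

lemma one_sub_mul_normalized_succ_succ (hβ : ∀ n, 1 - β * q ^ n ≠ 0)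
    (hprec : ∀ n, 1 ≤ n → p (n + 1) = x * p n -
      ((1 - q ^ n) / (1 - β * q ^ (n - 1))) * ((1 - q ^ (n + 1)) / (1 - β * q ^ n)) * p (n - 1))
    (n : ℕ) : (1 - q ^ (n + 2)) * A (n + 2) =
      x * (1 - β * q ^ (n + 1)) * A (n + 1) - (1 - q ^ (n + 2)) * A n := by
  have hp := hprec (n + 1) le_add_self
  simp only [add_tsub_cancel_right] at hp
  have hβ0 := hβ n
  have hβ1 := hβ (n + 1)
  have hq0 := hq n
  have hq1 := hq (n + 1)
  have hqPoch := qPoch_self_ne_zero hq n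
  rw [hA, hA, hA, hp, qPoch_succ β q (n + 1), qPoch_succ β q n, qPoch_self_succ q (n + 1),
    qPoch_self_succ q n]
  field_simp

end Normalization

lemma one_sub_mul_one_sub_mul_tsum_eq {q β z τ s : ℂ} {A : ℕ → ℂ} {M : ℝ} (hq : ‖q‖ < 1)
    (hz0 : z ≠ 0) (hτ : τ ≠ 0) (hrel : q * (τ + τ⁻¹) = β * (z + z⁻¹))
    (h1 : (1 - q) * A 1 = (z + z⁻¹) * (1 - β) * A 0)
    (hrec : ∀ n, (1 - q ^ (n + 2)) * A (n + 2) =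
      (z + z⁻¹) * (1 - β * q ^ (n + 1)) * A (n + 1) - (1 - q ^ (n + 2)) * A n)
    (hM : ∀ n, ‖A n‖ * ‖z‖ ^ n ≤ M) (hs : ‖s‖ < ‖z‖) :
    (1 - z * s) * (1 - z⁻¹ * s) * ∑' n, A n * s ^ n =
      (1 - q * τ * s) * (1 - q * τ⁻¹ * s) * ∑' n, A n * (q * s) ^ n := by
  have hqs : ‖q * s‖ < ‖z‖ := by
    rw [norm_mul]; exact (mul_le_of_le_one_left (norm_nonneg s) hq.le).trans_lt hs
  have hzs : (1 - z * s) * (1 - z⁻¹ * s) = 1 - (z + z⁻¹) * s + s ^ 2 := by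
    linear_combination s ^ 2 * mul_inv_cancel₀ hz0
  have hτs : (1 - q * τ * s) * (1 - q * τ⁻¹ * s) = 1 - β * (z + z⁻¹) * s + q ^ 2 * s ^ 2 := by
    linear_combination (-s) * hrel + q ^ 2 * s ^ 2 * mul_inv_cancel₀ hτ
  rw [hzs, hτs]
  exact mul_tsum_eq_mul_tsum_of_qRecurrence h1 hrec (summable_mul_pow_of_norm_mul_pow_le hM hs)
    (summable_mul_pow_of_norm_mul_pow_le hM hqs)

theorem tsum_mul_pow_mul_qPochInf_eq {q β z τ t : ℂ} {A : ℕ → ℂ} (hq : ‖q‖ < 1) (hz0 : z ≠ 0)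
    (hz1 : ‖z‖ < 1) (hτ : τ ≠ 0) (ht : ‖t‖ < ‖z‖) (hrel : q * (τ + τ⁻¹) = β * (z + z⁻¹))
    (hA0 : A 0 = 1) (h1 : (1 - q) * A 1 = (z + z⁻¹) * (1 - β) * A 0)
    (hrec : ∀ n, (1 - q ^ (n + 2)) * A (n + 2) =
      (z + z⁻¹) * (1 - β * q ^ (n + 1)) * A (n + 1) - (1 - q ^ (n + 2)) * A n) :
    (∑' n, A n * t ^ n) * (qPochInf (z * t) q * qPochInf (z⁻¹ * t) q) =
      qPochInf (q * τ * t) q * qPochInf (q * τ⁻¹ * t) q := by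
  obtain ⟨M, hM⟩ := exists_norm_mul_pow_le_of_qRecurrence hq hz0 hz1 hrec
  obtain ⟨G, hG⟩ : ∃ G : ℂ → ℂ, ∀ s, G s = ∑' n, A n * s ^ n := ⟨_, fun _ => rfl⟩
  obtain ⟨D, hD⟩ : ∃ D : ℂ → ℂ, ∀ s, D s = qPochInf (z * s) q * qPochInf (z⁻¹ * s) q :=
    ⟨_, fun _ => rfl⟩
  obtain ⟨N, hN⟩ : ∃ N : ℂ → ℂ, ∀ s, N s = qPochInf (q * τ * s) q * qPochInf (q * τ⁻¹ * s) q :=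
    ⟨_, fun _ => rfl⟩
  have hDq : ∀ s, D s = (1 - z * s) * (1 - z⁻¹ * s) * D (q * s) := fun s => by
    rw [hD, hD, qPochInf_mul_qPochInf_eq _ _ _ hq]
  have hNq : ∀ s, N s = (1 - q * τ * s) * (1 - q * τ⁻¹ * s) * N (q * s) := fun s => by
    rw [hN, hN, qPochInf_mul_qPochInf_eq _ _ _ hq]
  have hΦq : ∀ s, ‖s‖ ≤ ‖t‖ → G s * D s - N s =
      (1 - q * τ * s) * (1 - q * τ⁻¹ * s) * (G (q * s) * D (q * s) - N (q * s)) := by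
    intro s hs
    have hGq := one_sub_mul_one_sub_mul_tsum_eq hq hz0 hτ hrel h1 hrec hM (hs.trans_lt ht)
    rw [← hG, ← hG] at hGq
    rw [hDq s, hNq s]
    linear_combination D (q * s) * hGq
  have hΦ0 : Tendsto (fun s => G s * D s - N s) (𝓝 0) (𝓝 0) := by
    have hP : ∀ c : ℂ, Tendsto (fun s => qPochInf (c * s) q) (𝓝 0) (𝓝 1) := fun c =>
      (tendsto_qPochInf_nhds_zero hq).comp (by simpa using (continuous_const_mul c).tendsto 0)
    have hG0 := tendsto_tsum_mul_pow_nhds_zero (norm_pos_iff.2 hz0) hM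
    rw [hA0] at hG0
    simp only [hG, hD, hN]
    simpa using (hG0.mul ((hP z).mul (hP z⁻¹))).sub ((hP (q * τ)).mul (hP (q * τ⁻¹)))
  have hΦt := eq_zero_of_eq_mul_comp_mul (Φ := fun s => G s * D s - N s) hq (by positivity)
    (fun s _ => norm_one_sub_mul_one_sub_mul_le_exp _ _ s) hΦq hΦ0 le_rfl
  rw [← hG, ← hD, ← hN]
  exact sub_eq_zero.1 hΦt

theorem stmt_14 (q β : ℝ) (hq : q ∈ Set.Ioo (0 : ℝ) 1) (hβ : β < 1)
    (z τ t : ℂ) (hz0 : z ≠ 0) (hτ : τ ≠ 0)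
    (ht : ‖t‖ < ‖z‖) (hz1 : ‖z‖ < 1)
    (hrel : (q : ℂ) * (τ + τ⁻¹) = (β : ℂ) * (z + z⁻¹))
    (p : ℕ → ℂ → ℂ)
    (hp0 : ∀ x, p 0 x = 1) (hp1 : ∀ x, p 1 x = x)
    (hprec : ∀ n : ℕ, 1 ≤ n → ∀ x : ℂ,
      p (n + 1) x = x * p n x -
        ((1 - (q : ℂ) ^ n) / (1 - (β : ℂ) * (q : ℂ) ^ (n - 1))) *
        ((1 - (q : ℂ) ^ (n + 1)) / (1 - (β : ℂ) * (q : ℂ) ^ n)) * p (n - 1) x) :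
    ∑' n : ℕ, (qPoch (β : ℂ) (q : ℂ) n / qPoch (q : ℂ) (q : ℂ) n) * p n (z + z⁻¹) * t ^ n =
      qPochInf ((q : ℂ) * τ * t) (q : ℂ) * qPochInf ((q : ℂ) * τ⁻¹ * t) (q : ℂ) /
        (qPochInf (z * t) (q : ℂ) * qPochInf (z⁻¹ * t) (q : ℂ)) := by
  obtain ⟨hq0, hq1⟩ := hq
  have hqn : ‖(q : ℂ)‖ < 1 := by rwa [Complex.norm_real, Real.norm_of_nonneg hq0.le]
  have hqne : ∀ n, 1 - (q : ℂ) ^ (n + 1) ≠ 0 := one_sub_pow_succ_ne_zero hqn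
  have hβne : ∀ n, 1 - (β : ℂ) * (q : ℂ) ^ n ≠ 0 := fun n => by
    have hlt : β * q ^ n < 1 := by nlinarith [pow_pos hq0 n, pow_le_one₀ hq0.le hq1.le (n := n)]
    exact_mod_cast (sub_pos.2 hlt).ne'
  have hzt : ‖z * t‖ < 1 := by
    rw [norm_mul]; exact (mul_le_of_le_one_left (norm_nonneg t) hz1.le).trans_lt (ht.trans hz1)
  have hzt' : ‖z⁻¹ * t‖ < 1 := by
    rwa [norm_mul, norm_inv, inv_mul_lt_one₀ (norm_pos_iff.2 hz0)]
  rw [eq_div_iff (mul_ne_zero (qPochInf_ne_zero hzt hqn) (qPochInf_ne_zero hzt' hqn))]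
  exact tsum_mul_pow_mul_qPochInf_eq hqn hz0 hz1 hτ ht hrel (by simp [qPoch, hp0])
    (one_sub_mul_normalized_one (p := (p · (z + z⁻¹))) hqne (fun _ => rfl) (hp0 _) (hp1 _))
    (one_sub_mul_normalized_succ_succ (p := (p · (z + z⁻¹))) hqne (fun _ => rfl) hβne
      (fun n hn => hprec n hn _))
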